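/- Let ℋ = (𝒰, ℱ, 𝒰*) be a history graph for (o,T) for the j-neighbour Bootstrap Percolation. Then, as an inequality of real numbers, (Φ_V(G) − j + 1)·|𝒰| + 1 ≤ (Φ_V(G) − j + 2)·|𝒰*|. -/

import Mathlib

open Classical
noncomputable section

namespace Paper

variable {V : Type*}

/-- Number of neighbours of `x` whose value is `1` (`true`). -/
def cCount (G : SimpleGraph V) [DecidableRel G.Adj] [∀ v, Fintype (G.neighborSet v)]
    (η : V → Bool) (x : V) : ℕ :=
  ((G.neighborFinset x).filter fun y => η y = true).card

/-- The `j`-neighbour Bootstrap Percolation with noise set `N` and initial configuration `ξ`. -/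
noncomputable def bootstrapPerc (G : SimpleGraph V) [DecidableRel G.Adj]
    [∀ v, Fintype (G.neighborSet v)] (j : ℕ) (N : Set (V × ℕ)) (ξ : V → Bool) :
    ℕ → V → Bool
  | 0 => ξ
  | t + 1 => fun x =>
      if (x, t + 1) ∈ N then false
      else bootstrapPerc G j N ξ t x || decide (j ≤ cCount G (bootstrapPerc G j N ξ t) x)

/-- The `j`-threshold Consensus Process with noise set `N` and initial configuration `ξ`. -/
noncomputable def consensus (G : SimpleGraph V) [DecidableRel G.Adj]
    [∀ v, Fintype (G.neighborSet v)] (j : ℕ) (N : Set (V × ℕ)) (ξ : V → Bool) :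
    ℕ → V → Bool
  | 0 => ξ
  | t + 1 => fun x =>
      if (x, t + 1) ∈ N then false
      else decide (j ≤ cCount G (consensus G j N ξ t) x)

/-- `∂_E K`: number of edges with exactly one endpoint in `K`. -/
def edgeBoundaryCard (G : SimpleGraph V) [DecidableRel G.Adj]
    [∀ v, Fintype (G.neighborSet v)] (K : Finset V) : ℕ :=
  ∑ x ∈ K, ((G.neighborFinset x).filter fun y => y ∉ K).card

/-- The edge expansion constant `Φ_E(G)`. -/
noncomputable def edgeExpansion (G : SimpleGraph V) [DecidableRel G.Adj]
    [∀ v, Fintype (G.neighborSet v)] : ℝ :=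
  sInf {r : ℝ | ∃ K : Finset V, K.Nonempty ∧ r = (edgeBoundaryCard G K : ℝ) / (K.card : ℝ)}

/-- `∂_V K`: number of vertices outside `K` adjacent to a vertex of `K`. -/
def vertexBoundaryCard [DecidableEq V] (G : SimpleGraph V) [DecidableRel G.Adj]
    [∀ v, Fintype (G.neighborSet v)] (K : Finset V) : ℕ :=
  ((K.biUnion fun x => G.neighborFinset x) \ K).card

/-- The vertex expansion constant `Φ_V(G)`. -/
noncomputable def vertexExpansion [DecidableEq V] (G : SimpleGraph V) [DecidableRel G.Adj]
    [∀ v, Fintype (G.neighborSet v)] : ℝ :=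
  sInf {r : ℝ | ∃ K : Finset V, K.Nonempty ∧ r = (vertexBoundaryCard G K : ℝ) / (K.card : ℝ)}

/-- A history graph `(𝒰, ℱ, 𝒰*)` for `(o, T)`.  If `bp = true` it is a history graph for the
`j`-neighbour Bootstrap Percolation (one outgoing straight edge and `deg x − j + 1` outgoing
oblique edges at every vertex of `𝒰 \ 𝒰*`); if `bp = false` it is a history graph for the
`j`-threshold Consensus Process (no straight edges and `deg x − j + 1` outgoing oblique edges). -/
structure HistoryGraph (G : SimpleGraph V) [DecidableRel G.Adj]
    [∀ v, Fintype (G.neighborSet v)] (j : ℕ) (o : V) (T : ℕ) (bp : Bool) where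
  U : Finset (V × ℕ)
  F : Finset ((V × ℕ) × (V × ℕ))
  Ustar : Finset (V × ℕ)
  ustar_subset : Ustar ⊆ U
  edge_mem_fst : ∀ e ∈ F, e.1 ∈ U
  edge_mem_snd : ∀ e ∈ F, e.2 ∈ U
  edge_time : ∀ e ∈ F, e.1.2 = e.2.2 + 1
  edge_space : ∀ e ∈ F, e.1.1 = e.2.1 ∨ G.Adj e.1.1 e.2.1
  conn : ∀ u ∈ U, ∀ v ∈ U,
    Relation.ReflTransGen (fun a b => (a, b) ∈ F ∨ (b, a) ∈ F) u v
  root_mem : (o, T) ∈ U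
  time_range : ∀ u ∈ U, u ≠ (o, T) → 1 ≤ u.2 ∧ u.2 ≤ T
  time_one_star : ∀ u ∈ U, u.2 = 1 → u ∈ Ustar
  star_no_out : ∀ u ∈ Ustar, ∀ e ∈ F, e.1 ≠ u
  straight_count : ∀ u ∈ U, u ∉ Ustar →
      (F.filter fun e => e.1 = u ∧ e.2.1 = u.1).card = cond bp 1 0
  oblique_count : ∀ u ∈ U, u ∉ Ustar →
      (F.filter fun e => e.1 = u ∧ e.2.1 ≠ u.1).card = G.degree u.1 + 1 - j

/-- The strong product `G ⊠ ℕ`. -/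
def strongProd (G : SimpleGraph V) : SimpleGraph (V × ℕ) where
  Adj p q := p ≠ q ∧ (p.2 ≤ q.2 + 1 ∧ q.2 ≤ p.2 + 1) ∧ (p.1 = q.1 ∨ G.Adj p.1 q.1)
  symm := by
    constructor
    rintro p q ⟨h1, ⟨h2, h3⟩, h4⟩
    exact ⟨h1.symm, ⟨h3, h2⟩, h4.elim (fun e => Or.inl e.symm) fun a => Or.inr a.symm⟩
  loopless := ⟨fun p h => h.1 rfl⟩

/-- The connected component of `p` in the subgraph of `G ⊠ ℕ` induced by `Z`. -/
def cluster (G : SimpleGraph V) (Z : Set (V × ℕ)) (p : V × ℕ) : Set (V × ℕ) :=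
  {q | p ∈ Z ∧ q ∈ Z ∧
    Relation.ReflTransGen (fun a b => a ∈ Z ∧ b ∈ Z ∧ (strongProd G).Adj a b) p q}

/-- The witness-root property defining `j ≤ j̄`. -/
def radialGood (G : SimpleGraph V) [DecidableRel G.Adj] [∀ v, Fintype (G.neighborSet v)]
    (j : ℕ) : Prop :=
  ∃ r : V, ∀ x : V,
    j ≤ ((G.neighborFinset x).filter fun y => G.dist r y = G.dist r x + 1).card

end Paper

/-!
Slice the history graph by time. If `A` is the set of sites of `𝒰 \ 𝒰*` at time `t + 1` and `K`
the set of sites of `𝒰` at time `t`, the straight edges give `A ⊆ K` and the oblique edges show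
that each `x ∈ A` has at most `j - 1` neighbours outside `K`. Hence `∂_V A` consists of at most
`|K| - |A|` points of `K` and at most `(j - 1)|A|` points outside it, so
`(Φ_V - j + 2)|A| ≤ |K|`. Summing over `t < T`, and noting that `𝒰 \ 𝒰*` has no site at time `0`
while `𝒰` has the root at time `T`, gives `(Φ_V - j + 2)|𝒰 \ 𝒰*| ≤ |𝒰| - 1`, which rearranges to
the claim.
-/

open Finset

namespace Paper

variable {V : Type*}

section Expansion

variable [DecidableEq V] (G : SimpleGraph V) [DecidableRel G.Adj]
  [∀ v, Fintype (G.neighborSet v)]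

theorem vertexExpansion_mul_card_le {A : Finset V} (hA : A.Nonempty) :
    vertexExpansion G * #A ≤ vertexBoundaryCard G A := by
  have hpos : (0 : ℝ) < #A := by exact_mod_cast hA.card_pos
  have hbdd : BddBelow {r : ℝ | ∃ K : Finset V, K.Nonempty ∧
      r = (vertexBoundaryCard G K : ℝ) / (K.card : ℝ)} :=
    ⟨0, by rintro r ⟨K, -, rfl⟩; positivity⟩
  exact (le_div_iff₀ hpos).1 (csInf_le hbdd ⟨A, hA, rfl⟩)

variable {G} in
theorem vertexBoundaryCard_add_two_mul_card_le {A K : Finset V} {j : ℕ} (hAK : A ⊆ K)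
    (hA : ∀ x ∈ A, #{y ∈ G.neighborFinset x | y ∉ K} + 1 ≤ j) :
    vertexBoundaryCard G A + 2 * #A ≤ #K + j * #A := by
  set B := (A.biUnion fun x => G.neighborFinset x) \ A
  have hin : #{y ∈ B | y ∈ K} + #A ≤ #K := by
    rw [← card_union_of_disjoint (disjoint_left.2 fun y hy hyA =>
      (mem_sdiff.1 (mem_filter.1 hy).1).2 hyA)]
    exact card_le_card (union_subset (fun y hy => (mem_filter.1 hy).2) hAK)
  have hout : #{y ∈ B | y ∉ K} + #A ≤ j * #A :=
    calc #{y ∈ B | y ∉ K} + #A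
        ≤ #(A.biUnion fun x => {y ∈ G.neighborFinset x | y ∉ K}) + #A := by
          gcongr
          intro y hy
          obtain ⟨hyB, hyK⟩ := mem_filter.1 hy
          obtain ⟨x, hxA, hyx⟩ := mem_biUnion.1 (mem_sdiff.1 hyB).1
          exact mem_biUnion.2 ⟨x, hxA, mem_filter.2 ⟨hyx, hyK⟩⟩
      _ ≤ ∑ x ∈ A, (#{y ∈ G.neighborFinset x | y ∉ K} + 1) := by
          rw [sum_add_distrib, sum_const, smul_eq_mul, mul_one]
          gcongr
          exact card_biUnion_le
      _ ≤ j * #A := by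
          rw [mul_comm]
          exact sum_le_card_nsmul _ _ _ hA
  have hsplit := card_filter_add_card_filter_not (s := B) (p := (· ∈ K))
  change #B + 2 * #A ≤ #K + j * #A
  omega

variable {G} in
theorem vertexExpansion_sub_add_two_mul_card_le {A K : Finset V} {j : ℕ} (hAK : A ⊆ K)
    (hA : ∀ x ∈ A, #{y ∈ G.neighborFinset x | y ∉ K} + 1 ≤ j) :
    (vertexExpansion G - j + 2) * #A ≤ #K := by
  rcases A.eq_empty_or_nonempty with rfl | hne
  · simp
  have hPhi := vertexExpansion_mul_card_le G hne
  have hcount : (vertexBoundaryCard G A : ℝ) + 2 * #A ≤ #K + j * #A := by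
    exact_mod_cast vertexBoundaryCard_add_two_mul_card_le hAK hA
  linarith

end Expansion

def timeSlice (S : Finset (V × ℕ)) (t : ℕ) : Finset V :=
  {u ∈ S | u.2 = t}.image Prod.fst

@[simp]
theorem mem_timeSlice {S : Finset (V × ℕ)} {t : ℕ} {x : V} : x ∈ timeSlice S t ↔ (x, t) ∈ S := by
  simp [timeSlice]

theorem card_timeSlice (S : Finset (V × ℕ)) (t : ℕ) : #(timeSlice S t) = #{u ∈ S | u.2 = t} :=
  card_image_of_injOn fun _ hu _ hv huv =>
    Prod.ext huv (((mem_filter.1 hu).2).trans (mem_filter.1 hv).2.symm)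

theorem card_eq_sum_card_timeSlice {S : Finset (V × ℕ)} {n : ℕ} (hS : ∀ u ∈ S, u.2 < n) :
    #S = ∑ t ∈ range n, #(timeSlice S t) := by
  simp only [card_timeSlice]
  exact card_eq_sum_card_fiberwise fun u hu => mem_range.2 (hS u hu)

namespace HistoryGraph

variable {G : SimpleGraph V} [DecidableRel G.Adj] [∀ v, Fintype (G.neighborSet v)]
  {j : ℕ} {o : V} {T : ℕ}

theorem snd_le {bp : Bool} (H : HistoryGraph G j o T bp) {u : V × ℕ} (hu : u ∈ H.U) :
    u.2 ≤ T := by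
  by_cases h : u = (o, T)
  · rw [h]
  · exact (H.time_range u hu h).2

theorem exists_snd_eq_add_one_and_mem (H : HistoryGraph G j o T true) {u : V × ℕ}
    (hu : u ∈ H.U) (hu' : u ∉ H.Ustar) : ∃ t, u.2 = t + 1 ∧ (u.1, t) ∈ H.U := by
  have hpos : 0 < #{e ∈ H.F | e.1 = u ∧ e.2.1 = u.1} := by
    rw [H.straight_count u hu hu']
    exact Nat.one_pos
  obtain ⟨e, he⟩ := card_pos.1 hpos
  obtain ⟨heF, rfl, hstraight⟩ := mem_filter.1 he
  refine ⟨e.2.2, H.edge_time e heF, ?_⟩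
  rw [← hstraight]
  exact H.edge_mem_snd e heF

theorem degree_add_one_sub_le_card_neighbor_mem {bp : Bool} (H : HistoryGraph G j o T bp)
    {x : V} {t : ℕ} (hx : (x, t + 1) ∈ H.U) (hx' : (x, t + 1) ∉ H.Ustar) :
    G.degree x + 1 - j ≤ #{y ∈ G.neighborFinset x | (y, t) ∈ H.U} := by
  rw [← H.oblique_count _ hx hx']
  refine card_le_card_of_injOn (fun e => e.2.1) (fun e he => ?_) (fun e he e' he' h => ?_)
  · obtain ⟨heF, he1, hoblique⟩ := mem_filter.1 (mem_coe.1 he)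
    have hadj : G.Adj x e.2.1 := by
      have := H.edge_space e heF
      rw [he1] at this
      exact this.resolve_left (Ne.symm hoblique)
    have htime : e.2.2 = t := by
      have := H.edge_time e heF
      rw [he1] at this
      omega
    refine mem_coe.2 (mem_filter.2 ⟨(G.mem_neighborFinset _ _).2 hadj, ?_⟩)
    rw [← htime]
    exact H.edge_mem_snd e heF
  · obtain ⟨heF, he1, -⟩ := mem_filter.1 (mem_coe.1 he)
    obtain ⟨he'F, he'1, -⟩ := mem_filter.1 (mem_coe.1 he')
    have htime := H.edge_time e heF
    have htime' := H.edge_time e' he'F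
    rw [he1] at htime
    rw [he'1] at htime'
    exact Prod.ext (he1.trans he'1.symm) (Prod.ext h (by omega))

variable [DecidableEq V] (H : HistoryGraph G j o T true)

theorem timeSlice_sdiff_subset (t : ℕ) :
    timeSlice (H.U \ H.Ustar) (t + 1) ⊆ timeSlice H.U t := by
  intro x hx
  obtain ⟨hxU, hxU'⟩ := mem_sdiff.1 (mem_timeSlice.1 hx)
  obtain ⟨s, hs, hsU⟩ := H.exists_snd_eq_add_one_and_mem hxU hxU'
  obtain rfl : s = t := by simp only at hs; omega
  exact mem_timeSlice.2 hsU

theorem card_neighbor_notMem_timeSlice_add_one_le (hj : ∀ x, j ≤ G.degree x) {t : ℕ} {x : V}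
    (hx : x ∈ timeSlice (H.U \ H.Ustar) (t + 1)) :
    #{y ∈ G.neighborFinset x | y ∉ timeSlice H.U t} + 1 ≤ j := by
  obtain ⟨hxU, hxU'⟩ := mem_sdiff.1 (mem_timeSlice.1 hx)
  have hin : G.degree x + 1 - j ≤ #{y ∈ G.neighborFinset x | (y, t) ∈ H.U} := by
    -- `convert` identifies the classical decidability instance with the one from `DecidableEq V`.
    convert H.degree_add_one_sub_le_card_neighbor_mem hxU hxU'
  have hsplit := card_filter_add_card_filter_not (s := G.neighborFinset x)
    (p := (· ∈ timeSlice H.U t))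
  simp only [mem_timeSlice, G.card_neighborFinset_eq_degree] at hsplit ⊢
  have := hj x
  omega

theorem vertexExpansion_sub_add_two_mul_card_timeSlice_le (hj : ∀ x, j ≤ G.degree x) (t : ℕ) :
    (vertexExpansion G - j + 2) * #(timeSlice (H.U \ H.Ustar) (t + 1)) ≤
      #(timeSlice H.U t) :=
  vertexExpansion_sub_add_two_mul_card_le (H.timeSlice_sdiff_subset t)
    fun _ hx => H.card_neighbor_notMem_timeSlice_add_one_le hj hx

theorem timeSlice_sdiff_zero : timeSlice (H.U \ H.Ustar) 0 = ∅ := by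
  refine eq_empty_of_forall_notMem fun x hx => ?_
  obtain ⟨hxU, hxU'⟩ := mem_sdiff.1 (mem_timeSlice.1 hx)
  obtain ⟨t, ht, -⟩ := H.exists_snd_eq_add_one_and_mem hxU hxU'
  exact absurd ht (by simp)

theorem vertexExpansion_sub_add_two_mul_card_sdiff_le (hj : ∀ x, j ≤ G.degree x) :
    (vertexExpansion G - j + 2) * #(H.U \ H.Ustar) ≤ #H.U - 1 := by
  have hlt : ∀ u ∈ H.U, u.2 < T + 1 := fun u hu => Nat.lt_succ_of_le (H.snd_le hu)
  have hU := card_eq_sum_card_timeSlice hlt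
  have hD := card_eq_sum_card_timeSlice (S := H.U \ H.Ustar) fun u hu => hlt u (mem_sdiff.1 hu).1
  rw [sum_range_succ] at hU
  rw [sum_range_succ', H.timeSlice_sdiff_zero, card_empty, add_zero] at hD
  have hroot : 1 ≤ #(timeSlice H.U T) := card_pos.2 ⟨o, mem_timeSlice.2 H.root_mem⟩
  calc (vertexExpansion G - j + 2) * #(H.U \ H.Ustar)
      = ∑ t ∈ range T, (vertexExpansion G - j + 2) * #(timeSlice (H.U \ H.Ustar) (t + 1)) := by
        rw [hD, Nat.cast_sum, mul_sum]
    _ ≤ ∑ t ∈ range T, (#(timeSlice H.U t) : ℝ) :=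
        sum_le_sum fun t _ => H.vertexExpansion_sub_add_two_mul_card_timeSlice_le hj t
    _ ≤ #H.U - 1 := by
        rw [hU, Nat.cast_add, Nat.cast_sum]
        have : (1 : ℝ) ≤ #(timeSlice H.U T) := by exact_mod_cast hroot
        linarith

end HistoryGraph

end Paper

open Paper in
theorem historyGraph_vertex_expansion_inequality_BP_general
    {V : Type*} [DecidableEq V]
    (G : SimpleGraph V) [DecidableRel G.Adj] [∀ v, Fintype (G.neighborSet v)]
    (δ : ℕ) (hδ : IsGLB (Set.range fun x => G.degree x) δ)
    (j : ℕ) (hjδ : j ≤ δ)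
    (o : V) (T : ℕ) (H : HistoryGraph G j o T true) :
    (vertexExpansion G - j + 1) * H.U.card + 1 ≤
      (vertexExpansion G - j + 2) * H.Ustar.card := by
  have hj : ∀ x, j ≤ G.degree x := fun x => hjδ.trans (hδ.1 (Set.mem_range_self x))
  have hsum := H.vertexExpansion_sub_add_two_mul_card_sdiff_le hj
  rw [card_sdiff_of_subset H.ustar_subset, Nat.cast_sub (card_le_card H.ustar_subset)] at hsum
  linarith

open Paper in
/-- the vertex-expansion history-graph inequality (Lemma 4.6) for the
`j`-neighbour Bootstrap Percolation. -/
theorem historyGraph_vertex_expansion_inequality_BP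
    {V : Type*} [Infinite V] [DecidableEq V]
    (G : SimpleGraph V) [DecidableRel G.Adj] [∀ v, Fintype (G.neighborSet v)]
    (hconn : G.Connected)
    (Δ : ℕ) (hΔ : IsLUB (Set.range fun x => G.degree x) Δ)
    (δ : ℕ) (hδ : IsGLB (Set.range fun x => G.degree x) δ)
    (j : ℕ) (hj1 : 1 ≤ j) (hjδ : j ≤ δ)
    (o : V) (T : ℕ) (H : HistoryGraph G j o T true) :
    (vertexExpansion G - j + 1) * H.U.card + 1 ≤
      (vertexExpansion G - j + 2) * H.Ustar.card :=
  historyGraph_vertex_expansion_inequality_BP_general G δ hδ j hjδ o T H
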